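/- (Lemma, charge-at-capacity region) For every time t ∈ {0,…,T−1}, if the remaining EV charging demand satisfies y_t ≥ (T−t)·v̄, then every optimal EV charging decision in the Bellman equation at time t is v_t* = v̄. -/

import Mathlib

open MeasureTheory Set

/-- NEM X payment for net consumption `z` with buy price `pp` and sell price `pm`. -/
noncomputable def NEMPayment (pp pm z : ℝ) : ℝ := pp * max z 0 - pm * max (-z) 0

/-- The superdifferential of a function `f : ℝ → ℝ` (viewed as a concave function
on `[0, ∞)`) at a point `y`. -/
def superdiff (f : ℝ → ℝ) (y : ℝ) : Set ℝ :=
  {s | ∀ z, 0 ≤ z → f z ≤ f y + s * (z - y)}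

/-- Data of the EV-charging / flexible-consumption dynamic program over horizon
`{0, …, T-1}` with `K` flexible loads, under NEM time-of-use prices. -/
structure EVModel (K T : ℕ) (Ω : Type) [MeasurableSpace Ω] where
  /-- underlying probability measure -/
  μ : Measure Ω
  prob : IsProbabilityMeasure μ
  /-- consumption upper bounds -/
  dbar : Fin K → ℝ
  dbar_pos : ∀ i, 0 < dbar i
  /-- device utility functions -/
  U : Fin K → ℝ → ℝ
  U_strictConcave : ∀ i, StrictConcaveOn ℝ (Icc 0 (dbar i)) (U i)
  U_strictMono : ∀ i, StrictMonoOn (U i) (Icc 0 (dbar i))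
  U_diff : ∀ i, ∀ x ∈ Icc 0 (dbar i), DifferentiableWithinAt ℝ (U i) (Icc 0 (dbar i)) x
  U_contDeriv : ∀ i, ContinuousOn (fun x => derivWithin (U i) (Icc 0 (dbar i)) x) (Icc 0 (dbar i))
  U_zero : ∀ i, U i 0 = 0
  /-- renewable processes -/
  r : ℕ → Ω → ℝ
  r_meas : ∀ t, Measurable (r t)
  r_nonneg : ∀ t ω, 0 ≤ r t ω
  r_int : ∀ t, Integrable (r t) μ
  r_indep : ProbabilityTheory.iIndepFun r μ
  /-- time-of-use buy prices `π_t⁺` -/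
  pip : ℕ → ℝ
  /-- time-of-use sell prices `π_t⁻` -/
  pim : ℕ → ℝ
  /-- maximal per-period EV charge -/
  vbar : ℝ
  vbar_pos : 0 < vbar
  /-- per-unit penalty for unmet EV demand at the horizon -/
  γ : ℝ
  /-- `π_off⁻ = min_t π_t⁻` -/
  pioff : ℝ
  pioff_le : ∀ t < T, pioff ≤ pim t
  pioff_attained : ∃ t < T, pioff = pim t
  /-- assumption A1 -/
  A1 : ∀ t < T, 0 < pim t ∧ pim t ≤ pip t ∧ pip t < γ

namespace EVModel

variable {K T : ℕ} {Ω : Type} [MeasurableSpace Ω]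

/-- Stage reward `g_t(x_t, v, d)`. -/
noncomputable def stage (M : EVModel K T Ω) (t : ℕ) (rt v : ℝ) (d : Fin K → ℝ) : ℝ :=
  ∑ i, M.U i (d i) - NEMPayment (M.pip t) (M.pim t) (v + ∑ i, d i - rt)

/-- Feasible decisions `(v, d)` given remaining demand `y`. -/
def feas (M : EVModel K T Ω) (y : ℝ) : Set (ℝ × (Fin K → ℝ)) :=
  {p | p.1 ∈ Icc 0 (min M.vbar y) ∧ ∀ i, p.2 i ∈ Icc 0 (M.dbar i)}

/-- Value function indexed by `k = T - 1 - t`, the number of remaining periods after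
the current one. -/
noncomputable def W (M : EVModel K T Ω) : ℕ → ℝ → ℝ → ℝ
  | 0 => fun y rt => sSup ((fun p : ℝ × (Fin K → ℝ) =>
      M.stage (T - 1) rt p.1 p.2 - M.γ * (y - p.1)) '' M.feas y)
  | (k + 1) => fun y rt => sSup ((fun p : ℝ × (Fin K → ℝ) =>
      M.stage (T - 2 - k) rt p.1 p.2 +
        ∫ ω, M.W k (y - p.1) (M.r (T - 1 - k) ω) ∂M.μ) '' M.feas y)

/-- Value function `V_t(y, r_t)` (the price argument is determined by `t`). -/
noncomputable def V (M : EVModel K T Ω) (t : ℕ) (y rt : ℝ) : ℝ := M.W (T - 1 - t) y rt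

/-- Expected value function `V̄_t(y) = E[V_t(y, r_t, π_t)]`. -/
noncomputable def Vbar (M : EVModel K T Ω) (t : ℕ) (y : ℝ) : ℝ := ∫ ω, M.V t y (M.r t ω) ∂M.μ

/-- Objective of the Bellman equation at time `t` in state `(y, rt)`. -/
noncomputable def bellObj (M : EVModel K T Ω) (t : ℕ) (y rt : ℝ) (p : ℝ × (Fin K → ℝ)) : ℝ :=
  if t = T - 1 then M.stage t rt p.1 p.2 - M.γ * (y - p.1)
  else M.stage t rt p.1 p.2 + ∫ ω, M.V (t + 1) (y - p.1) (M.r (t + 1) ω) ∂M.μ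

/-- `(v, d)` is an optimal solution of the Bellman equation at time `t`. -/
def IsBellmanOpt (M : EVModel K T Ω) (t : ℕ) (y rt : ℝ) (p : ℝ × (Fin K → ℝ)) : Prop :=
  p ∈ M.feas y ∧ ∀ q ∈ M.feas y, M.bellObj t y rt q ≤ M.bellObj t y rt p

/-- Superdifferential `h_t` of the concave expected value function `V̄_t`. -/
noncomputable def h (M : EVModel K T Ω) (t : ℕ) (y : ℝ) : Set ℝ := superdiff (M.Vbar t) y

end EVModel

/-!
When `k + 1` periods remain, the value function is affine with slope `-γ` in the remaining
demand beyond `(k + 1) v̄`: at most `v̄` can be charged per period, so the excess is never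
served and every unit of it is paid for at the penalty `γ`. This is preserved by
one Bellman step (whose feasible set no longer depends on the demand once it exceeds `v̄`)
and by taking expectations over the renewables. Hence, when `y ≥ (T - t) v̄`, each unit of
charging withheld at time `t` costs `γ` later and saves at most `π⁺_t < γ` now, so a
maximiser charges `v̄`.
-/

def AffineOnIci (f : ℝ → ℝ) (m a : ℝ) : Prop :=
  ∀ z₁ z₂, a ≤ z₁ → a ≤ z₂ → f z₂ = f z₁ + m * (z₂ - z₁)

theorem LipschitzWith.integrable_comp {Ω E F : Type*} [MeasurableSpace Ω] {μ : Measure Ω}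
    [IsFiniteMeasure μ] [NormedAddCommGroup E] [NormedAddCommGroup F] {K : NNReal} {f : E → F}
    (hf : LipschitzWith K f) {X : Ω → E} (hX : Integrable X μ) :
    Integrable (fun ω => f (X ω)) μ := by
  refine ((integrable_const ‖f 0‖).add (hX.norm.const_mul K)).mono'
    (hf.continuous.comp_aestronglyMeasurable hX.1) (ae_of_all _ fun ω => ?_)
  have h := hf.norm_sub_le (X ω) 0
  rw [sub_zero] at h
  have := norm_le_norm_add_norm_sub' (f (X ω)) (f 0)
  simp only [Pi.add_apply]
  linarith

lemma csSup_image_add_const {α : Type*} {S : Set α} (hS : S.Nonempty) {g : α → ℝ}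
    (hg : BddAbove (g '' S)) (c : ℝ) :
    sSup ((fun p => g p + c) '' S) = sSup (g '' S) + c := by
  rw [← image_image (· + c) g]
  exact ((OrderIso.addRight c).map_csSup' (hS.image g) hg).symm

lemma abs_csSup_image_sub_le {α : Type*} {S : Set α} (hS : S.Nonempty) {f g : α → ℝ}
    (hf : BddAbove (f '' S)) (hg : BddAbove (g '' S)) {c : ℝ} (h : ∀ p ∈ S, |f p - g p| ≤ c) :
    |sSup (f '' S) - sSup (g '' S)| ≤ c := by
  have le_add : ∀ {f g : α → ℝ}, BddAbove (g '' S) → (∀ p ∈ S, f p - g p ≤ c) →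
      sSup (f '' S) ≤ sSup (g '' S) + c := fun hg h =>
    csSup_le (hS.image _) <| forall_mem_image.2 fun p hp => by
      linarith [h p hp, le_csSup hg (mem_image_of_mem _ hp)]
  rw [abs_sub_le_iff]
  constructor
  · linarith [le_add hg fun p hp => (abs_le.1 (h p hp)).2]
  · linarith [le_add (f := g) hf fun p hp => by linarith [(abs_le.1 (h p hp)).1]]

lemma NEMPayment_eq (pp pm z : ℝ) : NEMPayment pp pm z = pp * z + (pp - pm) * max (-z) 0 := by
  rcases le_total z 0 with h | h
  · rw [NEMPayment, max_eq_right h, max_eq_left (neg_nonneg.2 h)]; ring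
  · rw [NEMPayment, max_eq_left h, max_eq_right (neg_nonpos.2 h)]; ring

lemma NEMPayment_sub_mem_Icc {pp pm : ℝ} (h : pm ≤ pp) {z₁ z₂ : ℝ} (hz : z₁ ≤ z₂) :
    NEMPayment pp pm z₂ - NEMPayment pp pm z₁ ∈ Icc (pm * (z₂ - z₁)) (pp * (z₂ - z₁)) := by
  have h₁ : max (-z₂) 0 ≤ max (-z₁) 0 := max_le_max (neg_le_neg hz) le_rfl
  have h₂ : max (-z₁) 0 ≤ max (-z₂) 0 + (z₂ - z₁) :=
    max_le (by linarith [le_max_left (-z₂) 0]) (by linarith [le_max_right (-z₂) 0])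
  rw [NEMPayment_eq, NEMPayment_eq]
  constructor <;> nlinarith

lemma abs_NEMPayment_sub_le {pp pm : ℝ} (h₀ : 0 ≤ pm) (h : pm ≤ pp) (z₁ z₂ : ℝ) :
    |NEMPayment pp pm z₁ - NEMPayment pp pm z₂| ≤ pp * |z₁ - z₂| := by
  wlog hz : z₂ ≤ z₁ generalizing z₁ z₂
  · rw [abs_sub_comm, abs_sub_comm z₁]; exact this z₂ z₁ (le_of_not_ge hz)
  obtain ⟨hlo, hhi⟩ := NEMPayment_sub_mem_Icc h hz
  rw [abs_of_nonneg (sub_nonneg.2 hz), abs_le]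
  constructor <;> nlinarith

lemma mul_le_NEMPayment {pp pm : ℝ} (h : pm ≤ pp) (z : ℝ) : pm * z ≤ NEMPayment pp pm z := by
  rw [NEMPayment_eq]
  nlinarith [le_max_right (-z) 0, le_max_left (-z) 0]

/-- The bound and the Lipschitz estimate only keep the suprema finite and the expectations
integrable; the content is `affineOnIci`. -/
structure IsRegularValue (γ a : ℝ) (w : ℝ → ℝ → ℝ) : Prop where
  le_add_mul_abs : ∃ A, ∀ y, 0 ≤ y → ∀ r, w y r ≤ A + γ * |r|
  lipschitzWith : ∀ y, 0 ≤ y → LipschitzWith γ.toNNReal (w y)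
  affineOnIci : ∀ r, AffineOnIci (fun y => w y r) (-γ) a

section Expectation

variable {Ω : Type*} [MeasurableSpace Ω] {μ : Measure Ω} [IsProbabilityMeasure μ]
  {X : Ω → ℝ} {γ a : ℝ} {w : ℝ → ℝ → ℝ}

lemma IsRegularValue.integral_le (hw : IsRegularValue γ a w) (hX : Integrable X μ) :
    ∃ B, ∀ z, 0 ≤ z → ∫ ω, w z (X ω) ∂μ ≤ B := by
  obtain ⟨A, hA⟩ := hw.le_add_mul_abs
  refine ⟨A + γ * ∫ ω, |X ω| ∂μ, fun z hz => ?_⟩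
  have hbound : Integrable (fun ω => A + γ * |X ω|) μ :=
    (integrable_const A).add (hX.abs.const_mul γ)
  calc ∫ ω, w z (X ω) ∂μ ≤ ∫ ω, (A + γ * |X ω|) ∂μ :=
        integral_mono ((hw.lipschitzWith z hz).integrable_comp hX) hbound fun ω => hA z hz _
    _ = A + γ * ∫ ω, |X ω| ∂μ := by
        rw [integral_add (integrable_const A) (hX.abs.const_mul γ), integral_const_mul]
        simp

lemma IsRegularValue.affineOnIci_integral (hw : IsRegularValue γ a w) (ha : 0 ≤ a)
    (hX : Integrable X μ) : AffineOnIci (fun z => ∫ ω, w z (X ω) ∂μ) (-γ) a := by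
  intro z₁ z₂ hz₁ hz₂
  have hint := (hw.lipschitzWith z₁ (ha.trans hz₁)).integrable_comp hX
  simp only
  rw [integral_congr_ae (ae_of_all _ fun ω => hw.affineOnIci (X ω) z₁ z₂ hz₁ hz₂),
    integral_add hint (integrable_const _)]
  simp

end Expectation

namespace EVModel

variable {K T : ℕ} {Ω : Type} [MeasurableSpace Ω] (M : EVModel K T Ω)

noncomputable def bellmanValue (s : ℕ) (G : ℝ → ℝ) (y r : ℝ) : ℝ :=
  sSup ((fun p : ℝ × (Fin K → ℝ) => M.stage s r p.1 p.2 + G (y - p.1)) '' M.feas y)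

lemma W_zero (y r : ℝ) : M.W 0 y r = M.bellmanValue (T - 1) (fun z => -(M.γ * z)) y r := by
  simp only [W, bellmanValue, sub_eq_add_neg]

lemma W_succ (k : ℕ) (y r : ℝ) : M.W (k + 1) y r =
    M.bellmanValue (T - 2 - k) (fun z => ∫ ω, M.W k z (M.r (T - 1 - k) ω) ∂M.μ) y r :=
  rfl

variable {M}

lemma gamma_pos (hT : 0 < T) : 0 < M.γ := by
  obtain ⟨h₁, h₂, h₃⟩ := M.A1 0 hT
  linarith

lemma feas_nonempty {y : ℝ} (hy : 0 ≤ y) : (M.feas y).Nonempty :=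
  ⟨(0, 0), ⟨le_rfl, le_min M.vbar_pos.le hy⟩, fun i => ⟨le_rfl, (M.dbar_pos i).le⟩⟩

lemma feas_eq_of_vbar_le {y₁ y₂ : ℝ} (h₁ : M.vbar ≤ y₁) (h₂ : M.vbar ≤ y₂) :
    M.feas y₁ = M.feas y₂ := by
  simp only [feas, min_eq_left h₁, min_eq_left h₂]

lemma stage_le {s : ℕ} (hs : s < T) {y : ℝ} (r : ℝ) {p : ℝ × (Fin K → ℝ)} (hp : p ∈ M.feas y) :
    M.stage s r p.1 p.2 ≤ ∑ i, M.U i (M.dbar i) + M.γ * |r| := by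
  obtain ⟨hpm, hmp, hpγ⟩ := M.A1 s hs
  have hU : ∑ i, M.U i (p.2 i) ≤ ∑ i, M.U i (M.dbar i) := Finset.sum_le_sum fun i _ =>
    (M.U_strictMono i).monotoneOn (hp.2 i) ⟨(M.dbar_pos i).le, le_rfl⟩ (hp.2 i).2
  have hd : 0 ≤ ∑ i, p.2 i := Finset.sum_nonneg fun i _ => (hp.2 i).1
  have hP := mul_le_NEMPayment hmp (p.1 + ∑ i, p.2 i - r)
  have hr : M.pim s * r ≤ M.γ * |r| :=
    (mul_le_mul_of_nonneg_left (le_abs_self r) hpm.le).trans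
      (mul_le_mul_of_nonneg_right (by linarith) (abs_nonneg r))
  simp only [stage]
  nlinarith [hp.1.1]

lemma abs_stage_sub_le {s : ℕ} (hs : s < T) (r₁ r₂ v : ℝ) (d : Fin K → ℝ) :
    |M.stage s r₁ v d - M.stage s r₂ v d| ≤ M.γ * |r₁ - r₂| := by
  obtain ⟨hpm, hmp, hpγ⟩ := M.A1 s hs
  have h := abs_NEMPayment_sub_le hpm.le hmp (v + ∑ i, d i - r₂) (v + ∑ i, d i - r₁)
  rw [show v + ∑ i, d i - r₂ - (v + ∑ i, d i - r₁) = r₁ - r₂ by ring] at h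
  calc |M.stage s r₁ v d - M.stage s r₂ v d|
      = |NEMPayment (M.pip s) (M.pim s) (v + ∑ i, d i - r₂) -
          NEMPayment (M.pip s) (M.pim s) (v + ∑ i, d i - r₁)| := by
        simp only [stage]; ring_nf
    _ ≤ M.γ * |r₁ - r₂| := h.trans (mul_le_mul_of_nonneg_right hpγ.le (abs_nonneg _))

lemma bellmanValue_isRegularValue {s : ℕ} (hs : s < T) {G : ℝ → ℝ} {B a : ℝ}
    (hGB : ∀ z, 0 ≤ z → G z ≤ B) (hG : AffineOnIci G (-M.γ) a) (ha : 0 ≤ a) :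
    IsRegularValue M.γ (a + M.vbar) (M.bellmanValue s G) := by
  have hbound : ∀ y r, ∀ p ∈ M.feas y, M.stage s r p.1 p.2 + G (y - p.1) ≤
      (∑ i, M.U i (M.dbar i) + B) + M.γ * |r| := fun y r p hp => by
    linarith [M.stage_le hs r hp, hGB (y - p.1) (sub_nonneg.2 (hp.1.2.trans (min_le_right _ _)))]
  have hbdd : ∀ y r, BddAbove
      ((fun p : ℝ × (Fin K → ℝ) => M.stage s r p.1 p.2 + G (y - p.1)) '' M.feas y) :=
    fun y r => ⟨_, forall_mem_image.2 (hbound y r)⟩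
  refine ⟨⟨_, fun y hy r => csSup_le ((feas_nonempty hy).image _)
    (forall_mem_image.2 (hbound y r))⟩, fun y hy => ?_, fun r => ?_⟩
  · refine LipschitzWith.of_dist_le' fun r₁ r₂ => ?_
    simp only [Real.dist_eq]
    exact abs_csSup_image_sub_le (feas_nonempty hy) (hbdd y r₁) (hbdd y r₂) fun p _ => by
      simpa using M.abs_stage_sub_le hs r₁ r₂ p.1 p.2
  · intro y₁ y₂ hy₁ hy₂
    have hy₁0 : 0 ≤ y₁ := by linarith [M.vbar_pos]
    simp only [bellmanValue]
    rw [feas_eq_of_vbar_le (by linarith : M.vbar ≤ y₂) (by linarith : M.vbar ≤ y₁),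
      ← csSup_image_add_const (feas_nonempty hy₁0) (hbdd y₁ r)]
    refine congrArg sSup (image_congr fun p hp => ?_)
    have hv : p.1 ≤ M.vbar := hp.1.2.trans (min_le_left _ _)
    have := hG (y₁ - p.1) (y₂ - p.1) (by linarith) (by linarith)
    linarith

lemma W_isRegularValue (hT : 0 < T) (k : ℕ) :
    IsRegularValue M.γ ((k + 1) * M.vbar) (M.W k) := by
  have := M.prob
  induction k with
  | zero =>
    convert bellmanValue_isRegularValue (M := M) (by omega : T - 1 < T)
      (G := fun z => -(M.γ * z)) (B := 0) (fun z hz => by nlinarith [gamma_pos (M := M) hT])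
      (fun _ _ _ _ => by ring) le_rfl using 1
    · simp
    · funext y r; exact M.W_zero y r
  | succ k ih =>
    obtain ⟨B, hB⟩ := ih.integral_le (M.r_int (T - 1 - k))
    have ha : 0 ≤ ((k : ℝ) + 1) * M.vbar := mul_nonneg (by positivity) M.vbar_pos.le
    convert bellmanValue_isRegularValue (by omega : T - 2 - k < T) hB
      (ih.affineOnIci_integral ha (M.r_int _)) ha using 1
    · push_cast; ring
    · funext y r; exact M.W_succ k y r

lemma exists_bellObj_eq {t : ℕ} (ht : t < T) : ∃ G : ℝ → ℝ,
    AffineOnIci G (-M.γ) ((T - 1 - t : ℕ) * M.vbar) ∧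
      ∀ y r p, M.bellObj t y r p = M.stage t r p.1 p.2 + G (y - p.1) := by
  by_cases hlast : t = T - 1
  · refine ⟨fun z => -(M.γ * z), fun _ _ _ _ => by ring, fun y r p => ?_⟩
    simp only [bellObj, if_pos hlast]
    ring
  · have := M.prob
    refine ⟨fun z => ∫ ω, M.V (t + 1) z (M.r (t + 1) ω) ∂M.μ, ?_,
      fun y r p => by simp only [bellObj, if_neg hlast]⟩
    have hk : ((T - 1 - t : ℕ) : ℝ) = (T - 1 - (t + 1) : ℕ) + 1 := by
      rw [← Nat.cast_succ]; congr 1; omega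
    rw [hk]
    exact (W_isRegularValue (by omega) _).affineOnIci_integral
      (mul_nonneg (by positivity) M.vbar_pos.le) (M.r_int _)

lemma fst_eq_vbar_of_forall_le {s : ℕ} (hs : s < T) {G : ℝ → ℝ} {a y r : ℝ}
    (hG : AffineOnIci G (-M.γ) a) (ha : 0 ≤ a) (hy : a + M.vbar ≤ y)
    {p : ℝ × (Fin K → ℝ)} (hp : p ∈ M.feas y)
    (hopt : ∀ q ∈ M.feas y,
      M.stage s r q.1 q.2 + G (y - q.1) ≤ M.stage s r p.1 p.2 + G (y - p.1)) :
    p.1 = M.vbar := by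
  obtain ⟨hpm, hmp, hpγ⟩ := M.A1 s hs
  have hv : p.1 ≤ M.vbar := hp.1.2.trans (min_le_left _ _)
  have hq : (M.vbar, p.2) ∈ M.feas y := ⟨⟨M.vbar_pos.le, le_min le_rfl (by linarith)⟩, hp.2⟩
  have hpay := (NEMPayment_sub_mem_Icc hmp
    (by linarith : p.1 + ∑ i, p.2 i - r ≤ M.vbar + ∑ i, p.2 i - r)).2
  have hsave := hG (y - p.1) (y - M.vbar) (by linarith) (by linarith)
  -- charging the missing `v̄ - p.1` costs at most `π⁺_s` per unit now and saves `γ` per unit later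
  have hle := hopt _ hq
  simp only [stage] at hle
  have hgain : (M.γ - M.pip s) * (M.vbar - p.1) ≤ 0 := by linarith
  exact le_antisymm hv (sub_nonpos.1 (nonpos_of_mul_nonpos_right hgain (by linarith)))

end EVModel

theorem charge_at_capacity_general (K T : ℕ) (Ω : Type) [MeasurableSpace Ω]
    (M : EVModel K T Ω) (t : ℕ) (ht : t < T) (rt : ℝ)
    (y : ℝ) (hy : ((T - t : ℕ) : ℝ) * M.vbar ≤ y)
    (p : ℝ × (Fin K → ℝ)) (hp : M.IsBellmanOpt t y rt p) :
    p.1 = M.vbar := by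
  obtain ⟨G, hG, hobj⟩ := EVModel.exists_bellObj_eq (M := M) ht
  have hk : ((T - t : ℕ) : ℝ) = (T - 1 - t : ℕ) + 1 := by
    rw [← Nat.cast_succ]; congr 1; omega
  rw [hk] at hy
  refine EVModel.fst_eq_vbar_of_forall_le (r := rt) ht hG
    (mul_nonneg (by positivity) M.vbar_pos.le) (by linarith) hp.1 fun q hq => ?_
  simpa only [hobj] using hp.2 q hq

/-- **Lemma (charge-at-capacity region).**
For every `t ∈ {0, …, T-1}`, if the remaining EV charging demand satisfies
`y ≥ (T - t) v̄`, then every optimal EV charging decision in the Bellman equation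
at time `t` is `v* = v̄`. -/
theorem charge_at_capacity (K T : ℕ) (Ω : Type) [MeasurableSpace Ω]
    (M : EVModel K T Ω) (t : ℕ) (ht : t < T) (rt : ℝ) (hrt : 0 ≤ rt)
    (y : ℝ) (hy : ((T - t : ℕ) : ℝ) * M.vbar ≤ y)
    (p : ℝ × (Fin K → ℝ)) (hp : M.IsBellmanOpt t y rt p) :
    p.1 = M.vbar :=
  charge_at_capacity_general K T Ω M t ht rt y hy p hp
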